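/- arXiv:1106.0076 — 2 statements merged into one kernel-verified Lean document; each statement's English description precedes it below -/
import Mathlib

section
/- The characteristic-polynomial map χ: D^× → F^{d-1} × F^× from the unit group of a central division algebra D of degree d over a p-adic field F, sending b to the coefficients (a_1,…,a_d) of its reduced characteristic polynomial, is a proper map of topological spaces. -/
open Polynomial in
private lemma monic_pow_root_unique {F : Type*} [Field F] [CharZero F] {d m : ℕ} (hd : 0 < d)
    {r s : Polynomial F} (hr : r.Monic) (hs : s.Monic)
    (hrm : r.natDegree = m) (hsm : s.natDegree = m) (h : r ^ d = s ^ d) : r = s := by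
  by_contra hne
  have hgeom := geom_sum₂_mul r s d
  rw [h, sub_self] at hgeom
  rcases mul_eq_zero.mp hgeom with h0 | h0
  · have hco : (∑ i ∈ Finset.range d, r ^ i * s ^ (d - 1 - i)).coeff ((d - 1) * m)
        = (d : F) := by
      rw [Polynomial.finset_sum_coeff]
      have hterm : ∀ i ∈ Finset.range d,
          (r ^ i * s ^ (d - 1 - i)).coeff ((d - 1) * m) = 1 := by
        intro i hi
        have hilt : i < d := Finset.mem_range.mp hi
        have hmon : (r ^ i * s ^ (d - 1 - i)).Monic := (hr.pow i).mul (hs.pow _)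
        have hdeg : (r ^ i * s ^ (d - 1 - i)).natDegree = (d - 1) * m := by
          rw [Polynomial.natDegree_mul (hr.pow i).ne_zero (hs.pow _).ne_zero,
            Polynomial.natDegree_pow, Polynomial.natDegree_pow, hrm, hsm, ← Nat.add_mul]
          congr 1
          omega
        rw [← hdeg]
        exact hmon.coeff_natDegree
      rw [Finset.sum_congr rfl hterm]
      simp
    rw [h0, Polynomial.coeff_zero] at hco
    exact hd.ne' (by exact_mod_cast hco.symm)
  · exact hne (sub_eq_zero.mp h0)

/-- Let `F` be a `p`-adic field and `D` the central division algebra over `F` of degree `d`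
(so `dim_F D = d²`), topologized compatibly with its structure of finite-dimensional
`F`-vector space.  Let `P b` denote the reduced characteristic polynomial of `b ∈ D^×`
(the monic polynomial of degree `d` whose `d`-th power is the characteristic polynomial of
left multiplication by `b`), and let
`χ : D^× → F^{d-1} × F^×, b ↦ (a_1, …, a_{d-1}, a_d)` be the map collecting its
non-leading coefficients, the distinguished last coordinate `a_d` (the constant term, up
to sign the reduced norm) being nonzero.  Then `χ` is a proper map: the preimage of any
compact subset of `F^{d-1} × F^×` is compact. -/
theorem reduced_charpoly_map_is_proper
    {p : ℕ} [Fact p.Prime] (F : Type*) [NormedField F] [NormedAlgebra ℚ_[p] F]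
    [FiniteDimensional ℚ_[p] F] (d : ℕ) (hd : 0 < d)
    (D : Type*) [DivisionRing D] [Algebra F D]
    (hcentral : Subalgebra.center F D = ⊥)
    [FiniteDimensional F D] (hdim : Module.finrank F D = d ^ 2)
    [TopologicalSpace D] [IsTopologicalRing D]
    (e : D ≃L[F] (Fin (d * d) → F))
    (P : Dˣ → Polynomial F)
    (hP : ∀ b : Dˣ, (P b).Monic ∧ (P b).natDegree = d ∧
      (P b) ^ d = (LinearMap.mulLeft F (b : D)).charpoly) :
    ∀ C : Set ((Fin (d - 1) → F) × F), IsCompact C → (∀ y ∈ C, y.2 ≠ 0) →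
      IsCompact ((fun b : Dˣ =>
        ((fun i : Fin (d - 1) => (P b).coeff (i + 1), (P b).coeff 0) :
          (Fin (d - 1) → F) × F)) ⁻¹' C) := by
  classical
  intro C hC hC0
  haveI : ProperSpace F := FiniteDimensional.proper ℚ_[p] F
  haveI : CharZero F := charZero_of_injective_algebraMap (algebraMap ℚ_[p] F).injective
  haveI : T2Space D := e.toHomeomorph.isEmbedding.t2Space
  haveI : Nonempty (Fin (d * d)) := ⟨⟨0, Nat.mul_pos hd hd⟩⟩
  set bD : Module.Basis (Fin (d * d)) F D := Module.Basis.ofEquivFun e.toLinearEquiv with hbD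
  set M : D → Matrix (Fin (d * d)) (Fin (d * d)) F :=
    fun x => LinearMap.toMatrix bD bD (LinearMap.mulLeft F x) with hM
  have hM_entry : ∀ (x : D) i j, M x i j = e (x * bD j) i := by
    intro x i j
    show (LinearMap.toMatrix bD bD) (LinearMap.mulLeft F x) i j = e (x * bD j) i
    rw [LinearMap.toMatrix_apply, LinearMap.mulLeft_apply, hbD,
      Module.Basis.ofEquivFun_repr_apply]
    rfl
  have hM_cont : Continuous M := by
    apply continuous_matrix
    intro i j
    have : (fun x => M x i j) = fun x => e (x * bD j) i := funext fun x => hM_entry x i j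
    rw [this]
    exact (continuous_apply i).comp (e.continuous.comp (continuous_mul_right _))
  have hM_mul : ∀ x y : D, M (x * y) = M x * M y := by
    intro x y
    simp only [hM, LinearMap.mulLeft_mul, LinearMap.toMatrix_comp bD bD bD]
  have hM_one : M 1 = 1 := by
    simp [hM, LinearMap.mulLeft_one, LinearMap.toMatrix_id]
  have hM_smul : ∀ (t : F) (x : D), M (t • x) = t • M x := by
    intro t x
    have h : LinearMap.mulLeft F (t • x) = t • LinearMap.mulLeft F x := by
      ext y; simp [smul_mul_assoc]
    simp only [hM, h, map_smul]
  have hdet_ne : ∀ x : D, x ≠ 0 → (M x).det ≠ 0 := by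
    intro x hx
    have h1 : M x * M x⁻¹ = 1 := by rw [← hM_mul, mul_inv_cancel₀ hx, hM_one]
    have h2 := congrArg Matrix.det h1
    rw [Matrix.det_mul, Matrix.det_one] at h2
    exact left_ne_zero_of_mul_eq_one h2
  have hbridge : ∀ (x : D) (t : F),
      Polynomial.eval t (LinearMap.mulLeft F x).charpoly
        = ((Matrix.diagonal fun _ => t) - M x).det := by
    intro x t
    rw [← LinearMap.charpoly_toMatrix (LinearMap.mulLeft F x) bD]
    rw [Matrix.charpoly]
    rw [show Polynomial.eval t (Matrix.charmatrix (M x)).det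
        = ((Matrix.charmatrix (M x)).map (Polynomial.evalRingHom t)).det from
      RingHom.map_det (Polynomial.evalRingHom t) _]
    congr 1
    ext i j
    by_cases hij : i = j
    · subst hij
      simp [Matrix.map_apply, Matrix.sub_apply]
    · simp [Matrix.map_apply, Matrix.sub_apply, Matrix.charmatrix_apply_ne _ _ _ hij,
        Matrix.diagonal_apply_ne _ hij]
  set ev : ((Fin (d - 1) → F) × F) → F → F :=
    fun c t => t ^ d + (∑ i : Fin (d - 1), c.1 i * t ^ ((i : ℕ) + 1)) + c.2 with hev
  set χm : Dˣ → ((Fin (d - 1) → F) × F) :=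
    fun b => (fun i : Fin (d - 1) => (P b).coeff (i + 1), (P b).coeff 0) with hχm
  set cond : ((Fin (d - 1) → F) × F) → D → Prop :=
    fun c x => ∀ t : F, (ev c t) ^ d = ((Matrix.diagonal fun _ => t) - M x).det with hcond
  have heval_P : ∀ (b : Dˣ) (t : F), Polynomial.eval t (P b) = ev (χm b) t := by
    intro b t
    obtain ⟨hmon, hdeg, -⟩ := hP b
    have hclead : (P b).coeff d = 1 := by
      rw [← hdeg]; exact hmon.coeff_natDegree
    have key : ∀ f : ℕ → F, ∑ i ∈ Finset.range (d + 1), f i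
        = (f 0 + ∑ i ∈ Finset.range (d - 1), f (i + 1)) + f d := by
      intro f
      obtain ⟨k, rfl⟩ : ∃ k, d = k + 1 := ⟨d - 1, by omega⟩
      rw [Finset.sum_range_succ, Finset.sum_range_succ']
      simp only [Nat.add_sub_cancel]
      ring
    rw [Polynomial.eval_eq_sum_range, hdeg, key]
    simp only [hev, hχm, pow_zero, mul_one, hclead, one_mul]
    rw [Fin.sum_univ_eq_sum_range (fun i => (P b).coeff (i + 1) * t ^ (i + 1)) (d - 1)]
    ring
  have hcondχ : ∀ b : Dˣ, cond (χm b) (b : D) := by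
    intro b
    obtain ⟨hmon, hdeg, hpow⟩ := hP b
    intro t
    rw [← heval_P b t, ← Polynomial.eval_pow, hpow, hbridge]
  set q : ((Fin (d - 1) → F) × F) → Polynomial F :=
    fun c => Polynomial.X ^ d
      + ((∑ i : Fin (d - 1), Polynomial.C (c.1 i) * Polynomial.X ^ ((i : ℕ) + 1))
        + Polynomial.C c.2) with hq
  have hq_tail_deg : ∀ c : ((Fin (d - 1) → F) × F),
      ((∑ i : Fin (d - 1), Polynomial.C (c.1 i) * Polynomial.X ^ ((i : ℕ) + 1))
        + Polynomial.C c.2).degree < (d : ℕ) := by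
    intro c
    apply lt_of_le_of_lt (Polynomial.degree_add_le _ _)
    apply max_lt
    · apply lt_of_le_of_lt (Polynomial.degree_sum_le _ _)
      rw [Finset.sup_lt_iff (by exact_mod_cast WithBot.bot_lt_coe d)]
      intro i _
      apply lt_of_le_of_lt (Polynomial.degree_C_mul_X_pow_le _ _)
      exact_mod_cast (by omega : (i : ℕ) + 1 < d)
    · exact lt_of_le_of_lt Polynomial.degree_C_le (by exact_mod_cast hd)
  have hq_monic : ∀ c, (q c).Monic := fun c => Polynomial.monic_X_pow_add (hq_tail_deg c)
  have hq_deg : ∀ c, (q c).natDegree = d := by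
    intro c
    have hdeg : (q c).degree = d := by
      rw [hq]
      dsimp only
      rw [Polynomial.degree_add_eq_left_of_degree_lt (by
        rw [Polynomial.degree_X_pow]; exact hq_tail_deg c)]
      exact Polynomial.degree_X_pow d
    exact Polynomial.natDegree_eq_of_degree_eq_some hdeg
  have hq_eval : ∀ c t, Polynomial.eval t (q c) = ev c t := by
    intro c t
    simp [hq, hev, Polynomial.eval_finset_sum]
    ring
  have hq_coeff0 : ∀ c, (q c).coeff 0 = c.2 := by
    intro c
    have h1 : (Polynomial.X ^ d : Polynomial F).coeff 0 = 0 := by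
      rw [Polynomial.coeff_X_pow, if_neg (by omega : ¬(0 : ℕ) = d)]
    have h3 : (∑ i : Fin (d - 1), Polynomial.C (c.1 i)
        * Polynomial.X ^ ((i : ℕ) + 1)).coeff 0 = 0 := by
      rw [Polynomial.finset_sum_coeff]
      apply Finset.sum_eq_zero
      intro i _
      rw [Polynomial.coeff_C_mul, Polynomial.coeff_X_pow]
      simp
    simp [hq, Polynomial.coeff_add, h1, h3]
  have hq_coeffmid : ∀ c (i : Fin (d - 1)), (q c).coeff ((i : ℕ) + 1) = c.1 i := by
    intro c i
    have h1 : (Polynomial.X ^ d : Polynomial F).coeff ((i : ℕ) + 1) = 0 := by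
      rw [Polynomial.coeff_X_pow]
      have : ¬((i : ℕ) + 1 = d) := by have := i.isLt; omega
      simp [this]
    have h2 : (Polynomial.C c.2).coeff ((i : ℕ) + 1) = 0 := by
      rw [Polynomial.coeff_C]; simp
    have h3 : (∑ j : Fin (d - 1), Polynomial.C (c.1 j)
        * Polynomial.X ^ ((j : ℕ) + 1)).coeff ((i : ℕ) + 1) = c.1 i := by
      rw [Polynomial.finset_sum_coeff]
      rw [Finset.sum_eq_single i]
      · rw [Polynomial.coeff_C_mul, Polynomial.coeff_X_pow]; simp
      · intro j _ hji
        rw [Polynomial.coeff_C_mul, Polynomial.coeff_X_pow]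
        have : ¬((i : ℕ) + 1 = (j : ℕ) + 1) := by
          intro hEq
          exact hji (Fin.ext (by omega))
        rw [if_neg this, mul_zero]
      · intro hni
        exact absurd (Finset.mem_univ i) hni
    simp only [hq, Polynomial.coeff_add, h1, h2, h3, zero_add, add_zero]
  have huniq : ∀ (b : Dˣ) c, cond c (b : D) → c = χm b := by
    intro b c hc
    obtain ⟨hmon, hdeg, hpow⟩ := hP b
    have hqP : q c = P b := by
      apply monic_pow_root_unique hd (hq_monic c) hmon (hq_deg c) hdeg
      apply Polynomial.funext
      intro t
      rw [Polynomial.eval_pow, Polynomial.eval_pow, hq_eval, hc t, ← hbridge, ← hpow,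
        Polynomial.eval_pow]
    have h1 : c.1 = fun i : Fin (d - 1) => (P b).coeff (i + 1) := by
      funext i
      rw [← hqP, hq_coeffmid]
    have h2 : c.2 = (P b).coeff 0 := by rw [← hqP, hq_coeff0]
    rw [hχm]
    exact Prod.ext h1 h2
  -- empty case
  rcases C.eq_empty_or_nonempty with rfl | hCne
  · simpa using isCompact_empty
  obtain ⟨cM, hcM, hcMmax⟩ := hC.exists_isMaxOn hCne (continuous_snd.norm.continuousOn)
  obtain ⟨cm, hcm, hcmmin⟩ := hC.exists_isMinOn hCne (continuous_snd.norm.continuousOn)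
  set εv := ‖cm.2‖ with hεv
  have hε : 0 < εv := norm_pos_iff.mpr (hC0 cm hcm)
  set MC := ‖cM.2‖ with hMCdef
  -- annulus and minimum of the determinant norm
  set Ann : Set D := e ⁻¹' Metric.closedBall 0 (p : ℝ) ∩ {x : D | 1 ≤ ‖e x‖} with hAnn
  have hppos : (0 : ℝ) < p := by exact_mod_cast (Fact.out : p.Prime).pos
  have hp1 : (1 : ℝ) < p := by exact_mod_cast (Fact.out : p.Prime).one_lt
  have hAnnComp : IsCompact Ann :=
    ((e.toHomeomorph.isCompact_preimage).mpr (isCompact_closedBall _ _)).inter_right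
      (isClosed_le continuous_const e.continuous.norm)
  have hAnnNe : Ann.Nonempty := by
    refine ⟨e.symm (fun _ => 1), ?_, ?_⟩
    · simp only [Set.mem_preimage, Metric.mem_closedBall, dist_zero_right,
        ContinuousLinearEquiv.apply_symm_apply]
      rw [pi_norm_const]
      simp only [norm_one]
      exact hp1.le
    · show 1 ≤ ‖e (e.symm fun _ => 1)‖
      rw [ContinuousLinearEquiv.apply_symm_apply, pi_norm_const, norm_one]
  obtain ⟨y₀, hy₀, hy₀min⟩ := hAnnComp.exists_isMinOn hAnnNe (hM_cont.matrix_det.norm.continuousOn)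
  set δ := ‖(M y₀).det‖ with hδdef
  have hy₀ne : y₀ ≠ 0 := by
    intro h0
    have h1 : (1 : ℝ) ≤ ‖e y₀‖ := hy₀.2
    rw [h0] at h1
    norm_num at h1
  have hδ : 0 < δ := norm_pos_iff.mpr (hdet_ne _ hy₀ne)
  have hbound : ∀ (R : ℝ) (x : D), ‖(M x).det‖ ≤ R → ‖e x‖ ≤ p * max 1 (R / δ) := by
    intro R x hxR
    have hRHS0 : (0 : ℝ) ≤ p * max 1 (R / δ) := by positivity
    rcases eq_or_ne x 0 with rfl | hx
    · simpa using hRHS0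
    have hr : 0 < ‖e x‖ := by
      rw [norm_pos_iff]
      intro hex
      apply hx
      have := congrArg e.symm hex
      simpa using this
    obtain ⟨k, hk1, hk2⟩ := exists_mem_Ico_zpow hr hp1
    set t : F := algebraMap ℚ_[p] F ((p : ℚ_[p]) ^ k) with ht
    have hnt : ‖t‖ = (p : ℝ) ^ (-k) := by
      rw [ht, norm_algebraMap', Padic.norm_p_zpow]
    have hey : ‖e (t • x)‖ = (p : ℝ) ^ (-k) * ‖e x‖ := by
      rw [map_smul, norm_smul, hnt]
    have hpk_pos : ∀ m : ℤ, (0 : ℝ) < (p : ℝ) ^ m := fun m => by positivity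
    have hyAnn : t • x ∈ Ann := by
      constructor
      · simp only [Set.mem_preimage, Metric.mem_closedBall, dist_zero_right]
        rw [hey]
        have : (p : ℝ) ^ (-k) * ‖e x‖ < (p : ℝ) ^ (-k) * (p : ℝ) ^ (k + 1) :=
          mul_lt_mul_of_pos_left hk2 (hpk_pos _)
        apply le_of_lt (lt_of_lt_of_le this (le_of_eq ?_))
        rw [← zpow_add₀ hppos.ne']
        norm_num
      · show 1 ≤ ‖e (t • x)‖
        rw [hey]
        calc (1 : ℝ) = (p : ℝ) ^ (-k) * (p : ℝ) ^ k := by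
              rw [← zpow_add₀ hppos.ne']; norm_num
          _ ≤ _ := mul_le_mul_of_nonneg_left hk1 (hpk_pos _).le
    have hδy : δ ≤ ‖(M (t • x)).det‖ := hy₀min hyAnn
    have hMy : ‖(M (t • x)).det‖ = ((p : ℝ) ^ (-k)) ^ (d * d) * ‖(M x).det‖ := by
      rw [hM_smul, Matrix.det_smul, norm_mul, norm_pow, hnt, Fintype.card_fin]
    have hkn : ((p : ℝ) ^ k) ^ (d * d) ≤ R / δ := by
      rw [le_div_iff₀ hδ]
      have h1 : δ ≤ ((p : ℝ) ^ (-k)) ^ (d * d) * R := by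
        refine le_trans hδy ?_
        rw [hMy]
        exact mul_le_mul_of_nonneg_left hxR (by positivity)
      have hinv : ((p : ℝ) ^ (-k)) ^ (d * d) = (((p : ℝ) ^ k) ^ (d * d))⁻¹ := by
        rw [zpow_neg, inv_pow]
      rw [hinv] at h1
      have hA : (0 : ℝ) < ((p : ℝ) ^ k) ^ (d * d) := by positivity
      calc ((p : ℝ) ^ k) ^ (d * d) * δ
          ≤ ((p : ℝ) ^ k) ^ (d * d) * ((((p : ℝ) ^ k) ^ (d * d))⁻¹ * R) :=
            mul_le_mul_of_nonneg_left h1 hA.le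
        _ = R := by field_simp
    have hpk : (p : ℝ) ^ k ≤ max 1 (R / δ) := by
      rcases le_or_gt 1 ((p : ℝ) ^ k) with h1 | h1
      · exact le_trans (le_trans (le_self_pow₀ h1 (Nat.mul_pos hd hd).ne') hkn)
          (le_max_right _ _)
      · exact le_trans h1.le (le_max_left _ _)
    calc ‖e x‖ ≤ (p : ℝ) ^ (k + 1) := hk2.le
      _ = p * (p : ℝ) ^ k := by rw [zpow_add_one₀ hppos.ne', mul_comm]
      _ ≤ p * max 1 (R / δ) := mul_le_mul_of_nonneg_left hpk hppos.le
  -- final assembly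
  show IsCompact (χm ⁻¹' C)
  rw [Units.isEmbedding_embedProduct.isCompact_iff]
  set B1 := (p : ℝ) * max 1 (MC ^ d / δ) with hB1
  set B2 := (p : ℝ) * max 1 ((εv ^ d)⁻¹ / δ) with hB2
  set Kbig : Set (D × Dᵐᵒᵖ) :=
    (e ⁻¹' Metric.closedBall 0 B1) ×ˢ
      (MulOpposite.unop ⁻¹' (e ⁻¹' Metric.closedBall 0 B2)) with hKbig
  have hKcomp : IsCompact Kbig := by
    apply IsCompact.prod
    · exact (e.toHomeomorph.isCompact_preimage).mpr (isCompact_closedBall _ _)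
    · exact (MulOpposite.opHomeomorph.symm.isCompact_preimage).mpr
        ((e.toHomeomorph.isCompact_preimage).mpr (isCompact_closedBall _ _))
  haveI hCcs : CompactSpace ↥C := isCompact_iff_compactSpace.mp hC
  set W : Set (↥C × D) := {w | cond (w.1 : (Fin (d - 1) → F) × F) w.2} with hW
  have hWclosed : IsClosed W := by
    have hWeq : W = ⋂ t : F, {w : ↥C × D |
        (ev (w.1 : (Fin (d - 1) → F) × F) t) ^ d
          = ((Matrix.diagonal fun _ => t) - M w.2).det} := by
      ext w
      simp only [hW, hcond, Set.mem_setOf_eq, Set.mem_iInter]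
    rw [hWeq]
    refine isClosed_iInter fun t => isClosed_eq ?_ ?_
    · have hc1 : Continuous fun w : ↥C × D => ((w.1 : (Fin (d - 1) → F) × F)) :=
        continuous_subtype_val.comp continuous_fst
      apply Continuous.pow
      simp only [hev]
      exact (continuous_const.add
        (continuous_finset_sum _ fun i _ =>
          ((continuous_apply i).comp (continuous_fst.comp hc1)).mul continuous_const)).add
        (continuous_snd.comp hc1)
    · exact Continuous.matrix_det (continuous_const.sub (hM_cont.comp continuous_snd))
  set A : Set D := Prod.snd '' W with hA
  have hAclosed : IsClosed A := isClosedMap_snd_of_compactSpace W hWclosed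
  have hAmem : ∀ x : D, x ∈ A ↔ ∃ c ∈ C, cond c x := by
    intro x
    constructor
    · rintro ⟨⟨⟨c, hc⟩, x'⟩, hw, rfl⟩
      exact ⟨c, hc, hw⟩
    · rintro ⟨c, hc, hcnd⟩
      exact ⟨(⟨c, hc⟩, x), hcnd, rfl⟩
  set Zset : Set (D × Dᵐᵒᵖ) :=
    ({z | z.1 * MulOpposite.unop z.2 = 1} ∩ {z | MulOpposite.unop z.2 * z.1 = 1})
      ∩ (Prod.fst ⁻¹' A) with hZset
  have hZclosed : IsClosed Zset := by
    refine IsClosed.inter (IsClosed.inter ?_ ?_) (hAclosed.preimage continuous_fst)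
    · exact isClosed_eq
        (continuous_fst.mul (MulOpposite.continuous_unop.comp continuous_snd))
        continuous_const
    · exact isClosed_eq
        ((MulOpposite.continuous_unop.comp continuous_snd).mul continuous_fst)
        continuous_const
  have hZeq : (Units.embedProduct D) '' (χm ⁻¹' C) = Zset := by
    ext z
    constructor
    · rintro ⟨b, hb, rfl⟩
      refine ⟨⟨?_, ?_⟩, ?_⟩
      · show (b : D) * MulOpposite.unop (MulOpposite.op ((b⁻¹ : Dˣ) : D)) = 1
        rw [MulOpposite.unop_op]
        exact_mod_cast b.mul_inv
      · show MulOpposite.unop (MulOpposite.op ((b⁻¹ : Dˣ) : D)) * (b : D) = 1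
        rw [MulOpposite.unop_op]
        exact_mod_cast b.inv_mul
      · show (Units.embedProduct D b).1 ∈ A
        rw [hAmem]
        exact ⟨χm b, hb, hcondχ b⟩
    · rintro ⟨⟨h1, h2⟩, hz3⟩
      set u : Dˣ := ⟨z.1, MulOpposite.unop z.2, h1, h2⟩ with hu
      obtain ⟨c, hc, hcnd⟩ := (hAmem z.1).mp hz3
      refine ⟨u, ?_, ?_⟩
      · show χm u ∈ C
        have hcu : c = χm u := huniq u c hcnd
        rw [← hcu]
        exact hc
      · show Units.embedProduct D u = z
        have : (Units.embedProduct D u) = (z.1, MulOpposite.op (MulOpposite.unop z.2)) := rfl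
        rw [this, MulOpposite.op_unop]
  rw [hZeq]
  apply hKcomp.of_isClosed_subset hZclosed
  rintro z ⟨⟨h1, h2⟩, hz3⟩
  obtain ⟨c, hc, hcnd⟩ := (hAmem z.1).mp hz3
  have hdet1 : ‖(M z.1).det‖ = ‖c.2‖ ^ d := by
    have h0 := hcnd 0
    have hev0 : ev c 0 = c.2 := by
      simp [hev, zero_pow hd.ne']
    rw [hev0] at h0
    have hdiag : ((Matrix.diagonal fun _ : Fin (d * d) => (0 : F)) - M z.1) = -(M z.1) := by
      rw [Matrix.diagonal_zero, zero_sub]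
    rw [hdiag, Matrix.det_neg] at h0
    have hnorm := congrArg norm h0
    rw [norm_pow, norm_mul, norm_pow, norm_neg, norm_one, one_pow, one_mul] at hnorm
    exact hnorm.symm
  have hdetinv : (M z.1).det * (M (MulOpposite.unop z.2)).det = 1 := by
    rw [← Matrix.det_mul, ← hM_mul, h1, hM_one, Matrix.det_one]
  have hdet2 : ‖(M (MulOpposite.unop z.2)).det‖ = (‖c.2‖ ^ d)⁻¹ := by
    have hnorm := congrArg norm hdetinv
    rw [norm_mul, norm_one, hdet1] at hnorm
    have hnz : (‖c.2‖ : ℝ) ^ d ≠ 0 :=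
      pow_ne_zero d (norm_ne_zero_iff.mpr (hC0 c hc))
    have h2 : (‖c.2‖ ^ d)⁻¹ * (‖c.2‖ ^ d * ‖(M (MulOpposite.unop z.2)).det‖)
        = (‖c.2‖ ^ d)⁻¹ * 1 := by rw [hnorm]
    rwa [← mul_assoc, inv_mul_cancel₀ hnz, one_mul, mul_one] at h2
  constructor
  · show z.1 ∈ e ⁻¹' Metric.closedBall 0 B1
    simp only [Set.mem_preimage, Metric.mem_closedBall, dist_zero_right]
    apply hbound
    rw [hdet1]
    exact pow_le_pow_left₀ (norm_nonneg _) (hcMmax hc) d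
  · show MulOpposite.unop z.2 ∈ e ⁻¹' Metric.closedBall 0 B2
    simp only [Set.mem_preimage, Metric.mem_closedBall, dist_zero_right]
    apply hbound
    rw [hdet2]
    have h1' : εv ^ d ≤ ‖c.2‖ ^ d := pow_le_pow_left₀ hε.le (hcmmin hc) d
    exact inv_anti₀ (by positivity) h1'
end

section
/- Let G and H be groups, ρ an irreducible representation of H over a field k that is generated by a single vector x, and V a representation of G × H. Suppose K' is a subgroup of H stabilizing x. Then the natural map Hom_H(ρ, V) → V^{K'} sending f to f(x) is an injective G-equivariant linear map. Consequently, if V^{K'} is a finitely generated (respectively, Noetherian) G-module, so is Hom_H(ρ, V). -/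
open Submodule

/-- The `k`-submodule of `H`-equivariant linear maps from `(W, ρ)` to `(V, σH)`. -/
def equivariantHom {k : Type*} [Field k] {H : Type*} [Group H]
    {W V : Type*} [AddCommGroup W] [Module k W] [AddCommGroup V] [Module k V]
    (ρ : Representation k H W) (σH : Representation k H V) :
    Submodule k (W →ₗ[k] V) where
  carrier := {f | ∀ h : H, f ∘ₗ ρ h = σH h ∘ₗ f}
  add_mem' := by
    intro a b ha hb h
    simp only [LinearMap.add_comp, LinearMap.comp_add, ha h, hb h]
  zero_mem' := by intro h; simp
  smul_mem' := by
    intro c a ha h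
    simp only [LinearMap.smul_comp, LinearMap.comp_smul, ha h]

/-- Let `G`, `H` be groups, `ρ` a representation of `H` on `W` generated by a single
vector `x`, `V` a representation of `G × H` (commuting actions `σG`, `σH`), and `K' ≤ H`
a subgroup stabilizing `x`.  Then evaluation at `x`, `f ↦ f x`, is an injective
`G`-equivariant linear map from `Hom_H(ρ, V)` to the `K'`-invariants `V^{K'}`.
Consequently, if `V^{K'}` is a Noetherian `G`-module, so is `Hom_H(ρ, V)`
(every `G`-stable submodule is finitely generated as a `G`-module). -/
theorem homH_embeds_in_invariants_and_inherits_noetherian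
    {k : Type*} [Field k] {G H : Type*} [Group G] [Group H]
    {W V : Type*} [AddCommGroup W] [Module k W] [AddCommGroup V] [Module k V]
    (ρ : Representation k H W) (σG : Representation k G V) (σH : Representation k H V)
    (hcomm : ∀ (g : G) (h : H), Commute (σG g) (σH h))
    (x : W) (hx : Submodule.span k (Set.range fun h : H => ρ h x) = ⊤)
    (K' : Subgroup H) (hK' : ∀ h ∈ K', ρ h x = x) :
    -- `f ↦ f x` is injective on `Hom_H(ρ, V)`
    (∀ f₁ f₂ : W →ₗ[k] V, f₁ ∈ equivariantHom ρ σH → f₂ ∈ equivariantHom ρ σH →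
      f₁ x = f₂ x → f₁ = f₂) ∧
    -- its values lie in the `K'`-invariants `V^{K'}`
    (∀ f ∈ equivariantHom ρ σH, f x ∈ Representation.invariants (σH.comp K'.subtype)) ∧
    -- `Hom_H(ρ, V)` is `G`-stable and `f ↦ f x` is `G`-equivariant
    (∀ (g : G), ∀ f ∈ equivariantHom ρ σH,
      (σG g ∘ₗ f ∈ equivariantHom ρ σH) ∧ (σG g ∘ₗ f) x = σG g (f x)) ∧
    -- Noetherian consequence
    ((∀ P : Submodule k V, P ≤ Representation.invariants (σH.comp K'.subtype) →
        (∀ (g : G), ∀ v ∈ P, σG g v ∈ P) →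
        ∃ S : Finset V, (S : Set V) ⊆ P ∧
          P ≤ Submodule.span k {v : V | ∃ (g : G), ∃ s ∈ S, v = σG g s}) →
      (∀ Q : Submodule k (W →ₗ[k] V), Q ≤ equivariantHom ρ σH →
        (∀ (g : G), ∀ f ∈ Q, σG g ∘ₗ f ∈ Q) →
        ∃ S : Finset (W →ₗ[k] V), (S : Set (W →ₗ[k] V)) ⊆ Q ∧
          Q ≤ Submodule.span k {f : W →ₗ[k] V | ∃ (g : G), ∃ s ∈ S, f = σG g ∘ₗ s})) := by
  classical
  -- basic facts
  have mem_eq : ∀ f : W →ₗ[k] V, f ∈ equivariantHom ρ σH ↔ ∀ h : H, f ∘ₗ ρ h = σH h ∘ₗ f :=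
    fun f => Iff.rfl
  have inj : ∀ f₁ f₂ : W →ₗ[k] V, f₁ ∈ equivariantHom ρ σH → f₂ ∈ equivariantHom ρ σH →
      f₁ x = f₂ x → f₁ = f₂ := by
    intro f₁ f₂ h₁ h₂ hx12
    apply LinearMap.ext_on hx
    rintro _ ⟨h, rfl⟩
    have e1 : f₁ (ρ h x) = σH h (f₁ x) := by
      have := congrArg (fun φ => φ x) ((mem_eq f₁).mp h₁ h); simpa using this
    have e2 : f₂ (ρ h x) = σH h (f₂ x) := by
      have := congrArg (fun φ => φ x) ((mem_eq f₂).mp h₂ h); simpa using this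
    rw [e1, e2, hx12]
  have inv : ∀ f ∈ equivariantHom ρ σH, f x ∈ Representation.invariants (σH.comp K'.subtype) := by
    intro f hf
    intro h'
    have := congrArg (fun φ => φ x) ((mem_eq f).mp hf h')
    simp only [LinearMap.comp_apply] at this
    show (σH (h' : H)) (f x) = f x
    rw [← this, hK' h' h'.2]
  have gstab : ∀ (g : G), ∀ f ∈ equivariantHom ρ σH,
      (σG g ∘ₗ f ∈ equivariantHom ρ σH) ∧ (σG g ∘ₗ f) x = σG g (f x) := by
    intro g f hf
    constructor
    · intro h
      have hc : σG g ∘ₗ σH h = σH h ∘ₗ σG g := (hcomm g h).eq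
      rw [LinearMap.comp_assoc, (mem_eq f).mp hf h, ← LinearMap.comp_assoc,
        ← LinearMap.comp_assoc, hc]
    · rfl
  refine ⟨inj, inv, gstab, ?_⟩
  intro hP Q hQ hQg
  -- evaluation map
  set ev : (W →ₗ[k] V) →ₗ[k] V := LinearMap.applyₗ x with hev
  set P : Submodule k V := Q.map ev with hPdef
  have hPle : P ≤ Representation.invariants (σH.comp K'.subtype) := by
    rintro _ ⟨f, hf, rfl⟩
    exact inv f (hQ hf)
  have hPg : ∀ (g : G), ∀ v ∈ P, σG g v ∈ P := by
    rintro g _ ⟨f, hf, rfl⟩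
    exact ⟨σG g ∘ₗ f, hQg g f hf, rfl⟩
  obtain ⟨S, hSP, hPspan⟩ := hP P hPle hPg
  have hchoice : ∀ s ∈ S, ∃ f, f ∈ Q ∧ f x = s := by
    intro s hs
    obtain ⟨f, hf, hfx⟩ := hSP hs
    exact ⟨f, hf, hfx⟩
  choose fs hfsQ hfsx using hchoice
  refine ⟨S.attach.image (fun s => fs s.1 s.2), ?_, ?_⟩
  · intro f hf
    simp only [Finset.coe_image, Set.mem_image, Finset.mem_coe, Finset.mem_attach,
      true_and] at hf
    obtain ⟨s, _, rfl⟩ := hf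
    exact hfsQ s.1 s.2
  · intro f hfQ
    set S' : Finset (W →ₗ[k] V) := S.attach.image (fun s => fs s.1 s.2) with hS'
    set T : Submodule k (W →ₗ[k] V) :=
      Submodule.span k {g : W →ₗ[k] V | ∃ (g' : G), ∃ s ∈ S', g = σG g' ∘ₗ s} with hT
    -- T is contained in equivariantHom
    have hTle : T ≤ equivariantHom ρ σH := by
      rw [hT, Submodule.span_le]
      rintro _ ⟨g', s, hs, rfl⟩
      have hsQ : s ∈ Q := by
        simp only [hS', Finset.mem_image, Finset.mem_attach, true_and] at hs
        obtain ⟨t, rfl⟩ := hs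
        exact hfsQ t.1 t.2
      exact (gstab g' s (hQ hsQ)).1
    -- f x lies in the image of T under ev
    have hfx_mem : f x ∈ T.map ev := by
      have h1 : f x ∈ P := ⟨f, hfQ, rfl⟩
      have h2 := hPspan h1
      refine Submodule.span_le.mpr ?_ h2
      rintro _ ⟨g', s, hs, rfl⟩
      refine ⟨σG g' ∘ₗ fs s hs, ?_, ?_⟩
      · apply Submodule.subset_span
        refine ⟨g', fs s hs, ?_, rfl⟩
        simp only [hS', Finset.mem_image, Finset.mem_attach, true_and]
        exact ⟨⟨s, hs⟩, rfl⟩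
      · show (σG g' ∘ₗ fs s hs) x = σG g' s
        rw [LinearMap.comp_apply, hfsx s hs]
    obtain ⟨t, htT, htx⟩ := hfx_mem
    have : f = t := inj f t (hQ hfQ) (hTle htT) htx.symm
    rw [this]
    exact htT
end
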